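/- There is an absolute constant c > 0 such that for all positive integers n, m, k, ℓ and each choice of sign ± : if √n + √m ± √k − √ℓ ≠ 0, then |√n + √m ± √k − √ℓ| ≥ c · (nmkℓ)^{−1/2} · max(n,m,k,ℓ)^{−3/2}. -/
import Mathlib


open Real MeasureTheory Finset
open scoped Classical

noncomputable section

private lemma one_le_mul'' {x y : ℝ} (h1 : 1 ≤ x) (h2 : 1 ≤ y) : 1 ≤ x*y := by nlinarith

private lemma helper1 {x G : ℝ} (hx : 4 ≤ x) (hG : 1 ≤ G) : 1 ≤ 768 * x * G := by nlinarith

private lemma helper2 {x s w : ℝ} (h3 : 2 ≤ x*(4*s)) (h : 1 ≤ w*s^2) (hx : 0 ≤ x) :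
    1 ≤ 768 * x * (w * s^3) := by
  have h4 : 0 ≤ x*(4*s) := le_trans (by norm_num) h3
  have h5 : (2:ℝ)*1 ≤ (x*(4*s))*(w*s^2) := mul_le_mul h3 h zero_le_one h4
  nlinarith [h5]

private lemma helper3 {x s w : ℝ} (h24 : 8*w ≤ x*(4*s)*(6*s^2)) (hw : 1 ≤ w) (hx : 0 ≤ x) :
    1 ≤ 768 * x * (w * s^3) := by
  have hw0 : (0:ℝ) ≤ w := by linarith
  have h6 := mul_le_mul_of_nonneg_right h24 hw0
  nlinarith [h6, sq_nonneg (w-1), sq_nonneg (w+1)]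

private lemma helper4 {x s w : ℝ} (hfin : 1 ≤ x*(4*s)*(6*s^2)*(24*w)) (hx : 0 ≤ x)
    (hw : 0 ≤ w) (hs : 0 ≤ s) : 1 ≤ 768 * x * (w * s^3) := by
  have hX : 0 ≤ x*(w*s^3) := mul_nonneg hx (mul_nonneg hw (pow_nonneg hs 3))
  nlinarith [hfin, hX]

set_option maxHeartbeats 1000000 in
/-- Key estimate, stated for abstract reals `a b c d = √n, √m, √k, √l` and
integers `Iz, Nz` witnessing integrality of the rationalized expressions. -/
lemma four_roots_aux (a b c d e sM : ℝ) (Iz Nz : ℤ)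
    (ha1 : 1 ≤ a) (hb1 : 1 ≤ b) (hc1 : 1 ≤ c) (hd1 : 1 ≤ d)
    (haM : a ≤ sM) (hbM : b ≤ sM) (hcM : c ≤ sM) (hdM : d ≤ sM)
    (he : e = 1 ∨ e = -1)
    (hIz : (Iz : ℝ) = a^2 + b^2 - c^2 - d^2)
    (hNz : (Nz : ℝ) = (4*(a*b)^2 + 4*(c*d)^2 - (a^2+b^2-c^2-d^2)^2)^2 - 64*(a*b*c*d)^2)
    (hS0 : a + b + e*c - d ≠ 0) :
    1 ≤ 768 * |a + b + e*c - d| * ((a*b*c*d) * sM^3) := by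
  have he2 : e^2 = 1 := by rcases he with rfl | rfl <;> norm_num
  have habs_e : |e| = 1 := by rcases he with rfl | rfl <;> norm_num
  have ha0 : (0:ℝ) ≤ a := by linarith
  have hb0 : (0:ℝ) ≤ b := by linarith
  have hc0 : (0:ℝ) ≤ c := by linarith
  have hd0 : (0:ℝ) ≤ d := by linarith
  have hsM1 : 1 ≤ sM := ha1.trans haM
  have hsM0 : (0:ℝ) ≤ sM := by linarith
  set S := a + b + e*c - d with hSdef
  set T1 := a + b - e*c + d with hT1def
  set Ir : ℝ := a^2 + b^2 - c^2 - d^2 with hIrdef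
  set T2 := -Ir + 2*(a*b) + 2*e*(c*d) with hT2def
  set Kr : ℝ := 4*(a*b)^2 + 4*(c*d)^2 - Ir^2 with hKrdef
  set w := a*b*c*d with hwdef
  clear_value S T1 Ir T2 Kr w
  -- basic bounds
  have hab1 : 1 ≤ a*b := one_le_mul'' ha1 hb1
  have hcd1 : 1 ≤ c*d := one_le_mul'' hc1 hd1
  have hw1 : 1 ≤ w := by
    rw [hwdef]
    calc (1:ℝ) = 1*1 := by norm_num
    _ ≤ (a*b)*(c*d) := mul_le_mul hab1 hcd1 zero_le_one (mul_nonneg ha0 hb0)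
    _ = a*b*c*d := by ring
  have hw0 : (0:ℝ) < w := by linarith
  have ha2M : a^2 ≤ sM^2 := pow_le_pow_left₀ ha0 haM 2
  have hb2M : b^2 ≤ sM^2 := pow_le_pow_left₀ hb0 hbM 2
  have hc2M : c^2 ≤ sM^2 := pow_le_pow_left₀ hc0 hcM 2
  have hd2M : d^2 ≤ sM^2 := pow_le_pow_left₀ hd0 hdM 2
  have hc21 : (1:ℝ) ≤ c^2 := by
    calc (1:ℝ) = 1*1 := by norm_num
    _ ≤ c*c := mul_le_mul hc1 hc1 zero_le_one hc0
    _ = c^2 := by ring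
  have hd21 : (1:ℝ) ≤ d^2 := by
    calc (1:ℝ) = 1*1 := by norm_num
    _ ≤ d*d := mul_le_mul hd1 hd1 zero_le_one hd0
    _ = d^2 := by ring
  have hsM21 : (1:ℝ) ≤ sM^2 := by
    calc (1:ℝ) = 1*1 := by norm_num
    _ ≤ sM*sM := mul_le_mul hsM1 hsM1 zero_le_one hsM0
    _ = sM^2 := by ring
  have habM : a*b ≤ sM^2 := by
    calc a*b ≤ sM*sM := mul_le_mul haM hbM hb0 hsM0
    _ = sM^2 := by ring
  have hcdM : c*d ≤ sM^2 := by
    calc c*d ≤ sM*sM := mul_le_mul hcM hdM hd0 hsM0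
    _ = sM^2 := by ring
  have hsM3 : 1 ≤ sM^3 := by
    calc (1:ℝ) = 1*1 := by norm_num
    _ ≤ sM^2*sM := mul_le_mul hsM21 hsM1 zero_le_one (by linarith)
    _ = sM^3 := by ring
  have hG1 : 1 ≤ w * sM^3 := one_le_mul'' hw1 hsM3
  -- the rationalization identities
  have hQ : S * T1 = Ir + 2*(a*b) + 2*e*(c*d) := by
    rw [hSdef, hT1def, hIrdef]
    linear_combination (-(c^2)) * he2
  have hR : (Ir + 2*(a*b) + 2*e*(c*d)) * T2 = Kr + 8*e*w := by
    rw [hT2def, hKrdef, hIrdef, hwdef]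
    linear_combination (4*c^2*d^2) * he2
  have hNr : (Kr + 8*e*w) * (Kr - 8*e*w) = Kr^2 - 64*w^2 := by
    linear_combination (-(64*w^2)) * he2
  -- absolute-value bounds on the conjugate factors
  have habsT1 : |T1| ≤ 4*sM := by
    rw [abs_le]
    constructor <;> rcases he with rfl | rfl <;> rw [hT1def] <;> linarith
  have habsT2 : |T2| ≤ 6*sM^2 := by
    have hIub : Ir ≤ 2*sM^2 := by rw [hIrdef]; linarith
    have hIlb : -(2*sM^2) ≤ Ir := by
      rw [hIrdef]; linarith [sq_nonneg a, sq_nonneg b, hc2M, hd2M]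
    have hab0 : (0:ℝ) ≤ a*b := mul_nonneg ha0 hb0
    have hcd0 : (0:ℝ) ≤ c*d := mul_nonneg hc0 hd0
    rw [abs_le]
    constructor <;> rcases he with rfl | rfl <;> rw [hT2def] <;> linarith
  have habs8ew : |8*e*w| = 8*w := by
    rw [abs_mul, abs_mul, habs_e, abs_of_pos hw0]
    norm_num
  -- main case analysis
  by_cases hT1z : T1 = 0
  · -- degenerate case: then e = 1 and S = 2a+2b ≥ 4
    rcases he with rfl | rfl
    · have hSval : S = 2*a + 2*b := by
        rw [hT1def] at hT1z; rw [hSdef]; linarith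
      have h4 : (4:ℝ) ≤ |S| := by
        refine le_trans ?_ (le_abs_self S)
        rw [hSval]; linarith
      exact helper1 h4 hG1
    · exfalso; rw [hT1def] at hT1z; linarith
  · have hQne : Ir + 2*(a*b) + 2*e*(c*d) ≠ 0 := by
      rw [← hQ]; exact mul_ne_zero hS0 hT1z
    by_cases hT2z : T2 = 0
    · -- then Q = 2 Ir with Ir a nonzero integer
      have hQval : Ir + 2*(a*b) + 2*e*(c*d) = 2*Ir := by
        rw [hT2def] at hT2z; linarith
      have hIr_ne : Ir ≠ 0 := by
        intro h; apply hQne; rw [hQval, h]; ring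
      have hIr1 : 1 ≤ |Ir| := by
        have h1 : Iz ≠ 0 := by
          intro h; apply hIr_ne; rw [h] at hIz; simpa using hIz.symm
        have h2 := Int.one_le_abs h1
        have h3 : ((1:ℤ):ℝ) ≤ ((|Iz| : ℤ):ℝ) := Int.cast_le.mpr h2
        rw [Int.cast_abs, hIz] at h3
        simpa using h3
      have hA : |S| * |T1| = 2 * |Ir| := by
        rw [← abs_mul, hQ, hQval, abs_mul]
        norm_num
      have h3 : 2 ≤ |S| * (4*sM) := by
        have h2le : 2 ≤ |S| * |T1| := by rw [hA]; linarith
        exact le_trans h2le (mul_le_mul_of_nonneg_left habsT1 (abs_nonneg S))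
      have hws2 : 1 ≤ w * sM^2 := one_le_mul'' hw1 hsM21
      exact helper2 h3 hws2 (abs_nonneg S)
    · have hRne : Kr + 8*e*w ≠ 0 := by
        rw [← hR]; exact mul_ne_zero hQne hT2z
      have hRabs : |Kr + 8*e*w| = |S| * |T1| * |T2| := by
        rw [← hR, ← hQ, abs_mul, abs_mul]
      have hfinal_big : 8*w ≤ |Kr + 8*e*w| → (1:ℝ) ≤ 768 * |S| * (w * sM^3) := by
        intro h8w
        have s1 : |S| * |T1| ≤ |S| * (4*sM) :=
          mul_le_mul_of_nonneg_left habsT1 (abs_nonneg S)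
        have s2 : |S| * |T1| * |T2| ≤ |S| * (4*sM) * (6*sM^2) :=
          mul_le_mul s1 habsT2 (abs_nonneg _)
            (mul_nonneg (abs_nonneg _) (by linarith))
        have h24 : 8*w ≤ |S| * (4*sM) * (6*sM^2) := by
          rw [hRabs] at h8w; linarith
        exact helper3 h24 hw1 (abs_nonneg S)
      rcases le_or_gt (|Kr|) (16*w) with hK | hK
      · by_cases hT3z : Kr - 8*e*w = 0
        · apply hfinal_big
          have hval : Kr + 8*e*w = 16*e*w := by linarith
          rw [hval]
          have h16 : |16*e*w| = 16*w := by
            rw [abs_mul, abs_mul, habs_e, abs_of_pos hw0]; norm_num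
          rw [h16]; linarith
        · have hNne : Kr^2 - 64*w^2 ≠ 0 := by
            rw [← hNr]; exact mul_ne_zero hRne hT3z
          have hN1 : (1:ℝ) ≤ |Kr^2 - 64*w^2| := by
            have h1 : Nz ≠ 0 := by
              intro h; apply hNne; rw [h] at hNz; simpa using hNz.symm
            have h2 := Int.one_le_abs h1
            have h3 : ((1:ℤ):ℝ) ≤ ((|Nz| : ℤ):ℝ) := Int.cast_le.mpr h2
            rw [Int.cast_abs, hNz] at h3
            simpa using h3
          have habsT3 : |Kr - 8*e*w| ≤ 24*w := by
            have h1 : |Kr - 8*e*w| ≤ |Kr| + |8*e*w| := abs_sub _ _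
            rw [habs8ew] at h1; linarith
          have hNabs : |Kr^2 - 64*w^2| = |S| * |T1| * |T2| * |Kr - 8*e*w| := by
            rw [← hNr, abs_mul, hRabs]
          have s1 : |S| * |T1| ≤ |S| * (4*sM) :=
            mul_le_mul_of_nonneg_left habsT1 (abs_nonneg S)
          have s2 : |S| * |T1| * |T2| ≤ |S| * (4*sM) * (6*sM^2) :=
            mul_le_mul s1 habsT2 (abs_nonneg _)
              (mul_nonneg (abs_nonneg _) (by linarith))
          have s3 : |S| * |T1| * |T2| * |Kr - 8*e*w| ≤ |S| * (4*sM) * (6*sM^2) * (24*w) :=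
            mul_le_mul s2 habsT3 (abs_nonneg _)
              (mul_nonneg (mul_nonneg (abs_nonneg _) (by linarith)) (by positivity))
          have hfin : 1 ≤ |S| * (4*sM) * (6*sM^2) * (24*w) := by
            rw [hNabs] at hN1; linarith
          exact helper4 hfin (abs_nonneg S) hw0.le hsM0
      · apply hfinal_big
        have h1 : |Kr| ≤ |Kr + 8*e*w| + |8*e*w| := by
          have h2 := abs_add_le (Kr + 8*e*w) (-(8*e*w))
          have h3 : Kr + 8*e*w + -(8*e*w) = Kr := by ring
          rw [h3, abs_neg] at h2; exact h2
        rw [habs8ew] at h1; linarith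

set_option maxHeartbeats 2000000 in
theorem four_square_roots_spacing :
    ∃ c : ℝ, 0 < c ∧ ∀ (n m k l : ℕ) (e : ℝ), (e = 1 ∨ e = -1) →
      0 < n → 0 < m → 0 < k → 0 < l →
      Real.sqrt n + Real.sqrt m + e * Real.sqrt k - Real.sqrt l ≠ 0 →
      c * (((n * m * k * l : ℕ) : ℝ) ^ (-(1:ℝ)/2)
            * ((max (max n m) (max k l) : ℕ) : ℝ) ^ (-(3:ℝ)/2))
        ≤ |Real.sqrt n + Real.sqrt m + e * Real.sqrt k - Real.sqrt l| := by
  refine ⟨1/768, by norm_num, ?_⟩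
  intro n m k l e he hn hm hk hl hS0
  set M : ℕ := max (max n m) (max k l) with hMdef
  have hnM : n ≤ M := le_trans (le_max_left n m) (le_max_left _ _)
  have hmM : m ≤ M := le_trans (le_max_right n m) (le_max_left _ _)
  have hkM : k ≤ M := le_trans (le_max_left k l) (le_max_right _ _)
  have hlM : l ≤ M := le_trans (le_max_right k l) (le_max_right _ _)
  set a := Real.sqrt n with hadef
  set b := Real.sqrt m with hbdef
  set c := Real.sqrt k with hcdef
  set d := Real.sqrt l with hddef
  set sM := Real.sqrt M with hsMdef
  have ha2 : a^2 = (n:ℝ) := Real.sq_sqrt (by positivity)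
  have hb2 : b^2 = (m:ℝ) := Real.sq_sqrt (by positivity)
  have hc2 : c^2 = (k:ℝ) := Real.sq_sqrt (by positivity)
  have hd2 : d^2 = (l:ℝ) := Real.sq_sqrt (by positivity)
  have hsM2 : sM^2 = (M:ℝ) := Real.sq_sqrt (by positivity)
  have ha1 : 1 ≤ a := Real.one_le_sqrt.mpr (by exact_mod_cast hn)
  have hb1 : 1 ≤ b := Real.one_le_sqrt.mpr (by exact_mod_cast hm)
  have hc1 : 1 ≤ c := Real.one_le_sqrt.mpr (by exact_mod_cast hk)
  have hd1 : 1 ≤ d := Real.one_le_sqrt.mpr (by exact_mod_cast hl)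
  have haM : a ≤ sM := Real.sqrt_le_sqrt (by exact_mod_cast hnM)
  have hbM : b ≤ sM := Real.sqrt_le_sqrt (by exact_mod_cast hmM)
  have hcM : c ≤ sM := Real.sqrt_le_sqrt (by exact_mod_cast hkM)
  have hdM : d ≤ sM := Real.sqrt_le_sqrt (by exact_mod_cast hlM)
  have hsM0 : (0:ℝ) ≤ sM := Real.sqrt_nonneg _
  have hw1 : (1:ℝ) ≤ a*b*c*d := by
    calc (1:ℝ) = 1*1 := by norm_num
    _ ≤ (a*b)*(c*d) := by
        refine mul_le_mul ?_ ?_ zero_le_one (by positivity)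
        · calc (1:ℝ) = 1*1 := by norm_num
          _ ≤ a*b := mul_le_mul ha1 hb1 zero_le_one (by linarith)
        · calc (1:ℝ) = 1*1 := by norm_num
          _ ≤ c*d := mul_le_mul hc1 hd1 zero_le_one (by linarith)
    _ = a*b*c*d := by ring
  have hw0 : (0:ℝ) < a*b*c*d := by linarith
  -- integrality witnesses
  have hIz : (((n:ℤ) + m - k - l : ℤ) : ℝ) = a^2 + b^2 - c^2 - d^2 := by
    rw [ha2, hb2, hc2, hd2]; push_cast; ring
  have hNz : (((4*(n:ℤ)*m + 4*(k:ℤ)*l - ((n:ℤ)+m-k-l)^2)^2 - 64*((n:ℤ)*m*k*l) : ℤ) : ℝ)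
      = (4*(a*b)^2 + 4*(c*d)^2 - (a^2+b^2-c^2-d^2)^2)^2 - 64*(a*b*c*d)^2 := by
    have h1 : (4*(a*b)^2 + 4*(c*d)^2 - (a^2+b^2-c^2-d^2)^2)^2 - 64*(a*b*c*d)^2
        = (4*(a^2*b^2) + 4*(c^2*d^2) - (a^2+b^2-c^2-d^2)^2)^2 - 64*(a^2*b^2*c^2*d^2) := by ring
    rw [h1, ha2, hb2, hc2, hd2]; push_cast; ring
  have hmain := four_roots_aux a b c d e sM ((n:ℤ) + m - k - l)
    ((4*(n:ℤ)*m + 4*(k:ℤ)*l - ((n:ℤ)+m-k-l)^2)^2 - 64*((n:ℤ)*m*k*l))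
    ha1 hb1 hc1 hd1 haM hbM hcM hdM he hIz hNz hS0
  -- rewrite the rpow expressions
  have e1 : ((n * m * k * l : ℕ) : ℝ) ^ (-(1:ℝ)/2) = (a*b*c*d)⁻¹ := by
    have hX : ((n * m * k * l : ℕ) : ℝ) = (a*b*c*d)^2 := by
      have h1 : (a*b*c*d)^2 = a^2*b^2*c^2*d^2 := by ring
      rw [h1, ha2, hb2, hc2, hd2]; push_cast; ring
    rw [hX, ← Real.rpow_natCast (a*b*c*d) 2, ← Real.rpow_mul hw0.le,
      show ((2:ℕ):ℝ) * (-(1:ℝ)/2) = -1 by norm_num, Real.rpow_neg_one]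
  have e2 : ((M : ℕ) : ℝ) ^ (-(3:ℝ)/2) = (sM^3)⁻¹ := by
    rw [← hsM2, ← Real.rpow_natCast sM 2, ← Real.rpow_mul hsM0,
      show ((2:ℕ):ℝ) * (-(3:ℝ)/2) = -((3:ℕ):ℝ) by norm_num,
      Real.rpow_neg hsM0, Real.rpow_natCast]
  rw [e1, e2]
  have hsM3pos : (0:ℝ) < sM^3 := by positivity
  have hkey : (1:ℝ)/768 * ((a*b*c*d)⁻¹ * (sM^3)⁻¹) = 1 / (768 * ((a*b*c*d) * sM^3)) := by
    rw [one_div, one_div, mul_inv, mul_inv]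
    ring
  rw [hkey, div_le_iff₀ (by positivity)]
  nlinarith [hmain]
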